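/- arXiv:2503.05579 — 2 statements merged into one kernel-verified Lean document; each statement's English description precedes it below -/
import Mathlib

section
/- Let S be a semigroup. If F1 and F2 are idempotent collections on S (that is, F_i ⊆ F_i · F_i), then F1 ⊓ F2 is idempotent. -/
variable {S : Type*}

/-- The mesh of a collection `F` on `S`. -/
def mesh (F : Set (Set S)) : Set (Set S) :=
  {A | ∀ B ∈ F, (A ∩ B).Nonempty}

/-- A stack is an upward closed collection. -/
def IsStack (F : Set (Set S)) : Prop :=
  ∀ A ∈ F, ∀ B : Set S, A ⊆ B → B ∈ F

/-- A filter: a nonempty stack closed under finite intersections. -/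
def IsFilterColl (F : Set (Set S)) : Prop :=
  IsStack F ∧ F.Nonempty ∧ ∀ A ∈ F, ∀ B ∈ F, A ∩ B ∈ F

/-- A grill: a stack not containing `∅` satisfying the Ramsey property. -/
def IsGrill (G : Set (Set S)) : Prop :=
  IsStack G ∧ ∅ ∉ G ∧ ∀ A B : Set S, A ∪ B ∈ G → A ∈ G ∨ B ∈ G

/-- `F ⊓ G := {A ∩ B : A ∈ F, B ∈ G}`. -/
def smash (F G : Set (Set S)) : Set (Set S) :=
  {C | ∃ A ∈ F, ∃ B ∈ G, C = A ∩ B}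

/-- A proper collection: nonempty and not containing `∅`. -/
def IsProperColl (F : Set (Set S)) : Prop :=
  F.Nonempty ∧ ∅ ∉ F

variable [Semigroup S]

/-- The derived set of `A` along a collection `F`: `{h : h⁻¹A ∈ F}`. -/
def derivSet (A : Set S) (F : Set (Set S)) : Set S :=
  {h | {x | h * x ∈ A} ∈ F}

/-- The product of collections: `F · G := {A : A'(G) ∈ F}`. -/
def cprod (F G : Set (Set S)) : Set (Set S) :=
  {A | derivSet A G ∈ F}

theorem IsStack.smash {α : Type*} {F G : Set (Set α)} (hF : IsStack F) (hG : IsStack G) :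
    IsStack (smash F G) := by
  rintro _ ⟨A, hA, B, hB, rfl⟩ X hX
  refine ⟨A ∪ X, hF A hA _ Set.subset_union_left, B ∪ X, hG B hB _ Set.subset_union_left, ?_⟩
  rw [← Set.inter_union_distrib_right, Set.union_eq_self_of_subset_left hX]

theorem derivSet_inter_subset_derivSet_smash (A B : Set S) (F G : Set (Set S)) :
    derivSet A F ∩ derivSet B G ⊆ derivSet (A ∩ B) (smash F G) :=
  fun _ ⟨hA, hB⟩ ↦ ⟨_, hA, _, hB, rfl⟩

theorem inter_mem_cprod_smash {F₁ F₂ G₁ G₂ : Set (Set S)} (hF : IsStack (smash F₁ F₂))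
    {A B : Set S} (hA : A ∈ cprod F₁ G₁) (hB : B ∈ cprod F₂ G₂) :
    A ∩ B ∈ cprod (smash F₁ F₂) (smash G₁ G₂) :=
  hF _ ⟨_, hA, _, hB, rfl⟩ _ (derivSet_inter_subset_derivSet_smash A B G₁ G₂)

theorem smash_idempotent (F1 F2 : Set (Set S))
    (hF1 : IsStack F1) (hF2 : IsStack F2)
    (h1 : F1 ⊆ cprod F1 F1) (h2 : F2 ⊆ cprod F2 F2) :
    smash F1 F2 ⊆ cprod (smash F1 F2) (smash F1 F2) := by
  rintro _ ⟨A, hA, B, hB, rfl⟩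
  exact inter_mem_cprod_smash (hF1.smash hF2) (h1 hA) (h2 hB)
end

section
/- Let S be a semigroup and F, G collections on S. Then the mesh of the (F,G)-syndetic sets equals the (F,G)-thick sets: Syn(F,G)* = Thick(F,G). -/
/-!
Syndeticity and thickness are dual under complementation: the union of the translates
`h⁻¹Aᶜ` is the complement of the intersection of the `h⁻¹A`, and `Bᶜ ∈ mesh G` fails exactly
when `B ∈ mesh (mesh G)`, so `Aᶜ` is `(F,G)`-syndetic iff `A` is not `(F,G)`-thick. Since
`Syn(F,G)` is upward closed, its mesh consists of the sets whose complement is not syndetic.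
-/

variable {S : Type*}

variable [Semigroup S]

/-- A set `A` is `(F,G)`-syndetic. -/
def relSyn (F G : Set (Set S)) : Set (Set S) :=
  {A | ∀ B ∈ F, ∃ H : Finset S, H.Nonempty ∧ ↑H ⊆ B ∧
    (⋃ h ∈ H, {x | h * x ∈ A}) ∈ mesh (mesh G)}

/-- A set `A` is `(F,G)`-thick. -/
def relThick (F G : Set (Set S)) : Set (Set S) :=
  {A | ∃ B ∈ F, ∀ H : Finset S, H.Nonempty → ↑H ⊆ B →
    (⋂ h ∈ H, {x | h * x ∈ A}) ∈ mesh G}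

section Stack

variable {α : Type*}

theorem isStack_mesh (F : Set (Set α)) : IsStack (mesh F) :=
  fun _ hA _ hAB C hC => (hA C hC).mono (Set.inter_subset_inter_left C hAB)

theorem mem_mesh_iff_compl_notMem {F : Set (Set α)} (hF : IsStack F) {A : Set α} :
    A ∈ mesh F ↔ Aᶜ ∉ F := by
  constructor
  · intro hA hAc
    simpa using hA Aᶜ hAc
  · intro hAc B hB
    by_contra hAB
    exact hAc (hF B hB Aᶜ fun x hxB hxA => hAB ⟨x, hxA, hxB⟩)

end Stack

theorem isStack_relSyn (F G : Set (Set S)) : IsStack (relSyn F G) := by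
  intro A hA A' hAA' B hB
  obtain ⟨H, hH, hHB, hU⟩ := hA B hB
  exact ⟨H, hH, hHB, isStack_mesh _ _ hU _ <|
    Set.biUnion_mono subset_rfl fun _ _ _ hx => hAA' hx⟩

theorem compl_mem_relSyn_iff {F G : Set (Set S)} {A : Set S} :
    Aᶜ ∈ relSyn F G ↔ A ∉ relThick F G := by
  have hU (H : Finset S) :
      (⋃ h ∈ H, {x | h * x ∈ Aᶜ}) = (⋂ h ∈ H, {x | h * x ∈ A})ᶜ := by
    simp only [Set.compl_iInter]
    rfl
  simp only [relSyn, relThick, Set.mem_ofPred_eq, hU,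
    mem_mesh_iff_compl_notMem (isStack_mesh G), compl_compl]
  push Not
  rfl

theorem mesh_relSyn_eq_relThick (F G : Set (Set S)) :
    mesh (relSyn F G) = relThick F G := by
  ext A
  rw [mem_mesh_iff_compl_notMem (isStack_relSyn F G), compl_mem_relSyn_iff, not_not]
end
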